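/- The polytope Π = {x ∈ ℝ^n : x_{{1,...,n}} = c_{{1,...,n}} and x_J ≥ c_J for all nonempty proper J ⊆ {1,...,n}} equals the zonotope Z = ∑_{i<j} c_{ij}·[e_i, e_j] (Minkowski sum of dilated segments). -/

import Mathlib

/-!
`Z ⊆ Π` holds segment by segment. For `Π ⊆ Z`, add the edges one at a time. The set function
`J ↦ c_J` is supermodular, so if `x ∈ Π` for the edge set `E ∪ {ij}`, the least slacks `A` over the
sets `J ∋ i` with `j ∉ J` and `B` over the sets `J ∋ j` with `i ∉ J` (taken for `E`) satisfy
`A, B ≥ 0` and `A + B ≥ c_ij`. Hence `c_ij = s + (c_ij - s)` with `0 ≤ s ≤ A` and `c_ij - s ≤ B`,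
and `x - s e_i - (c_ij - s) e_j` lies in `Π` for `E`.
-/

open Finset

section InducedWeight

variable {ι : Type*} [DecidableEq ι]

def inducedWeight (w : ι × ι → ℝ) (E : Finset (ι × ι)) (J : Finset ι) : ℝ :=
  ∑ p ∈ E with p.1 ∈ J ∧ p.2 ∈ J, w p

def slack (w : ι × ι → ℝ) (E : Finset (ι × ι)) (x : ι → ℝ) (J : Finset ι) : ℝ :=
  ∑ k ∈ J, x k - inducedWeight w E J

/-- The point of `∑_{p ∈ E} w p • [e_{p.1}, e_{p.2}]` putting mass `a p` on `p.1` and the rest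
of `w p` on `p.2`. -/
def zonotopePoint (w : ι × ι → ℝ) (E : Finset (ι × ι)) (a : ι × ι → ℝ) : ι → ℝ :=
  ∑ p ∈ E, (a p • Pi.single p.1 1 + (w p - a p) • Pi.single p.2 1)

variable {w : ι × ι → ℝ} {E : Finset (ι × ι)} {p : ι × ι} {J : Finset ι} {x : ι → ℝ}

lemma inducedWeight_eq_sum_ite (w : ι × ι → ℝ) (E : Finset (ι × ι)) (J : Finset ι) :
    inducedWeight w E J = ∑ p ∈ E, if p.1 ∈ J ∧ p.2 ∈ J then w p else 0 :=
  sum_filter _ _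

lemma inducedWeight_insert_of_mem (hp : p ∉ E) (h₁ : p.1 ∈ J) (h₂ : p.2 ∈ J) :
    inducedWeight w (insert p E) J = w p + inducedWeight w E J := by
  rw [inducedWeight, filter_insert, if_pos ⟨h₁, h₂⟩,
    sum_insert fun h => hp (mem_filter.1 h).1, inducedWeight]

lemma inducedWeight_insert_of_notMem (h : ¬(p.1 ∈ J ∧ p.2 ∈ J)) :
    inducedWeight w (insert p E) J = inducedWeight w E J := by
  rw [inducedWeight, filter_insert, if_neg h, inducedWeight]

lemma inducedWeight_add_le_union_add_inter (hw : ∀ p, 0 ≤ w p) (E : Finset (ι × ι))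
    (J₁ J₂ : Finset ι) :
    inducedWeight w E J₁ + inducedWeight w E J₂ ≤
      inducedWeight w E (J₁ ∪ J₂) + inducedWeight w E (J₁ ∩ J₂) := by
  simp only [inducedWeight_eq_sum_ite, ← sum_add_distrib, mem_union, mem_inter]
  refine sum_le_sum fun p _ => ?_
  have := hw p
  split_ifs <;> first | linarith | (exfalso; tauto)

lemma sum_smul_single_add_smul_single_apply (J : Finset ι) (i j : ι) (a b : ℝ) :
    ∑ k ∈ J, (a • Pi.single i 1 + b • Pi.single j 1 : ι → ℝ) k =
      (if i ∈ J then a else 0) + (if j ∈ J then b else 0) := by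
  simp [sum_add_distrib, Pi.single_apply]

lemma smul_div_smul_add_one_sub_div_smul {M : Type*} [AddCommGroup M] [Module ℝ M]
    {c a : ℝ} (ha : 0 ≤ a) (hac : a ≤ c) (u v : M) :
    c • ((a / c) • u + (1 - a / c) • v) = a • u + (c - a) • v := by
  rcases eq_or_lt_of_le (ha.trans hac) with hc | hc
  · obtain rfl : a = 0 := le_antisymm (hc ▸ hac) ha
    simp [← hc]
  · rw [smul_add, smul_smul, smul_smul, mul_div_cancel₀ _ hc.ne', mul_sub, mul_one,
      mul_div_cancel₀ _ hc.ne']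

lemma exists_segment_param_iff (hw : ∀ p, 0 ≤ w p) :
    (∃ t : ι → ι → ℝ, (∀ i j, 0 ≤ t i j ∧ t i j ≤ 1) ∧
      x = ∑ p ∈ E, w p • (t p.1 p.2 • (Pi.single p.1 1 : ι → ℝ)
        + (1 - t p.1 p.2) • (Pi.single p.2 1 : ι → ℝ))) ↔
    ∃ a : ι × ι → ℝ, (∀ p, 0 ≤ a p ∧ a p ≤ w p) ∧ x = zonotopePoint w E a := by
  constructor
  · rintro ⟨t, ht, rfl⟩
    refine ⟨fun p => w p * t p.1 p.2, fun p => ⟨mul_nonneg (hw p) (ht _ _).1,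
      mul_le_of_le_one_right (hw p) (ht _ _).2⟩, sum_congr rfl fun p _ => ?_⟩
    module
  · rintro ⟨a, ha, rfl⟩
    refine ⟨fun i j => a (i, j) / w (i, j), fun i j => ⟨div_nonneg (ha _).1 (hw _),
      div_le_one_of_le₀ (ha _).2 (hw _)⟩, sum_congr rfl fun p _ => ?_⟩
    exact (smul_div_smul_add_one_sub_div_smul (ha p).1 (ha p).2 _ _).symm

end InducedWeight

section Core

variable {ι : Type*} [DecidableEq ι] [Fintype ι]
  {w : ι × ι → ℝ} {E : Finset (ι × ι)} {p : ι × ι} {x : ι → ℝ}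

/-- The polytope `Π`, i.e. the core of the cooperative game `J ↦ inducedWeight w E J`. -/
def IsCore (w : ι × ι → ℝ) (E : Finset (ι × ι)) (x : ι → ℝ) : Prop :=
  ∑ k, x k = inducedWeight w E univ ∧ ∀ J, inducedWeight w E J ≤ ∑ k ∈ J, x k

lemma isCore_iff : IsCore w E x ↔ ∑ k, x k = inducedWeight w E univ ∧
    ∀ J : Finset ι, J.Nonempty → J ≠ univ → inducedWeight w E J ≤ ∑ k ∈ J, x k := by
  refine ⟨fun h => ⟨h.1, fun J _ _ => h.2 J⟩, fun ⟨huniv, h⟩ => ⟨huniv, fun J => ?_⟩⟩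
  rcases J.eq_empty_or_nonempty with rfl | hJ
  · simp [inducedWeight]
  by_cases hJu : J = univ
  · exact hJu ▸ huniv.ge
  · exact h J hJ hJu

lemma IsCore.eq_zero_of_empty (hx : IsCore w ∅ x) : x = 0 := by
  have hnonneg : ∀ k, 0 ≤ x k := fun k => by simpa [inducedWeight] using hx.2 {k}
  have hsum : ∑ k, x k = 0 := by simpa [inducedWeight] using hx.1
  funext k
  exact (sum_eq_zero_iff_of_nonneg fun k _ => hnonneg k).1 hsum k (mem_univ k)

lemma IsCore.slack_nonneg_of_notMem (hx : IsCore w (insert p E) x) {J : Finset ι}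
    (h : ¬(p.1 ∈ J ∧ p.2 ∈ J)) : 0 ≤ slack w E x J := by
  have := hx.2 J
  rw [inducedWeight_insert_of_notMem h] at this
  exact sub_nonneg.2 this

lemma IsCore.le_slack_add_slack (hw : ∀ p, 0 ≤ w p) (hx : IsCore w (insert p E) x)
    (hp : p ∉ E) {J₁ J₂ : Finset ι} (h₁ : p.1 ∈ J₁) (h₁' : p.2 ∉ J₁) (h₂ : p.2 ∈ J₂) :
    w p ≤ slack w E x J₁ + slack w E x J₂ := by
  have hunion : w p + inducedWeight w E (J₁ ∪ J₂) ≤ ∑ k ∈ J₁ ∪ J₂, x k := by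
    rw [← inducedWeight_insert_of_mem hp (mem_union_left _ h₁) (mem_union_right _ h₂)]
    exact hx.2 _
  have hinter : inducedWeight w E (J₁ ∩ J₂) ≤ ∑ k ∈ J₁ ∩ J₂, x k := by
    rw [← inducedWeight_insert_of_notMem fun h => h₁' (mem_inter.1 h.2).1]
    exact hx.2 _
  have := inducedWeight_add_le_union_add_inter hw E J₁ J₂
  have := sum_union_inter (s₁ := J₁) (s₂ := J₂) (f := x)
  unfold slack
  linarith

lemma IsCore.exists_split (hw : ∀ p, 0 ≤ w p) (hx : IsCore w (insert p E) x) (hp : p ∉ E)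
    (hne : p.1 ≠ p.2) :
    ∃ s, 0 ≤ s ∧ s ≤ w p ∧ (∀ J : Finset ι, p.1 ∈ J → p.2 ∉ J → s ≤ slack w E x J) ∧
      ∀ J : Finset ι, p.2 ∈ J → p.1 ∉ J → w p - s ≤ slack w E x J := by
  obtain ⟨J₁, hJ₁, hmin₁⟩ := exists_min_image {J : Finset ι | p.1 ∈ J ∧ p.2 ∉ J}
    (slack w E x) ⟨{p.1}, by simp [hne.symm]⟩
  obtain ⟨J₂, hJ₂, hmin₂⟩ := exists_min_image {J : Finset ι | p.2 ∈ J ∧ p.1 ∉ J}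
    (slack w E x) ⟨{p.2}, by simp [hne]⟩
  simp only [mem_filter, mem_univ, true_and, and_imp] at hJ₁ hJ₂ hmin₁ hmin₂
  have hslack₁ := hx.slack_nonneg_of_notMem fun h => hJ₁.2 h.2
  have hslack₂ := hx.slack_nonneg_of_notMem fun h => hJ₂.2 h.1
  have hcross := hx.le_slack_add_slack hw hp hJ₁.1 hJ₁.2 hJ₂.1
  refine ⟨min (w p) (slack w E x J₁), le_min (hw p) hslack₁, min_le_left _ _,
    fun J h₁ h₂ => (min_le_right _ _).trans (hmin₁ J h₁ h₂), fun J h₂ h₁ => ?_⟩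
  refine le_trans ?_ (hmin₂ J h₂ h₁)
  rcases min_choice (w p) (slack w E x J₁) with h | h <;> rw [h] <;> linarith

lemma IsCore.sub_of_split (hx : IsCore w (insert p E) x) (hp : p ∉ E) {s : ℝ}
    (hs₁ : ∀ J : Finset ι, p.1 ∈ J → p.2 ∉ J → s ≤ slack w E x J)
    (hs₂ : ∀ J : Finset ι, p.2 ∈ J → p.1 ∉ J → w p - s ≤ slack w E x J) :
    IsCore w E (x - (s • Pi.single p.1 1 + (w p - s) • Pi.single p.2 1)) := by
  have hsum : ∀ J : Finset ι,
      ∑ k ∈ J, (x - (s • Pi.single p.1 1 + (w p - s) • Pi.single p.2 1) : ι → ℝ) k =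
        ∑ k ∈ J, x k - ((if p.1 ∈ J then s else 0) + (if p.2 ∈ J then w p - s else 0)) := by
    intro J
    rw [← sum_smul_single_add_smul_single_apply, ← sum_sub_distrib]
    rfl
  refine ⟨?_, fun J => ?_⟩
  · rw [hsum, if_pos (mem_univ _), if_pos (mem_univ _), hx.1,
      inducedWeight_insert_of_mem hp (mem_univ _) (mem_univ _)]
    ring
  rw [hsum]
  by_cases h₁ : p.1 ∈ J <;> by_cases h₂ : p.2 ∈ J <;> simp only [h₁, h₂, if_true, if_false]
  · linarith [inducedWeight_insert_of_mem (w := w) hp h₁ h₂ ▸ hx.2 J]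
  · linarith [slack.eq_def w E x J ▸ hs₁ J h₁ h₂]
  · linarith [slack.eq_def w E x J ▸ hs₂ J h₂ h₁]
  · linarith [inducedWeight_insert_of_notMem (w := w) (E := E) (fun h => h₁ h.1) ▸ hx.2 J]

lemma isCore_zonotopePoint {a : ι × ι → ℝ} (ha : ∀ p, 0 ≤ a p ∧ a p ≤ w p) :
    IsCore w E (zonotopePoint w E a) := by
  have hsum : ∀ J : Finset ι, ∑ k ∈ J, zonotopePoint w E a k =
      ∑ p ∈ E, ((if p.1 ∈ J then a p else 0) + (if p.2 ∈ J then w p - a p else 0)) := by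
    intro J
    simp only [zonotopePoint, Finset.sum_apply]
    rw [sum_comm]
    exact sum_congr rfl fun p _ => sum_smul_single_add_smul_single_apply J _ _ _ _
  refine ⟨?_, fun J => ?_⟩ <;> rw [hsum, inducedWeight_eq_sum_ite]
  · simp
  · refine sum_le_sum fun p _ => ?_
    obtain ⟨h₀, h₁⟩ := ha p
    split_ifs <;> first | linarith | (exfalso; tauto)

lemma IsCore.exists_eq_zonotopePoint (hw : ∀ p, 0 ≤ w p) (hE : ∀ p ∈ E, p.1 ≠ p.2)
    (hx : IsCore w E x) :
    ∃ a : ι × ι → ℝ, (∀ p, 0 ≤ a p ∧ a p ≤ w p) ∧ x = zonotopePoint w E a := by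
  induction E using Finset.induction_on generalizing x with
  | empty => exact ⟨0, fun p => ⟨le_rfl, hw p⟩, by simp [zonotopePoint, hx.eq_zero_of_empty]⟩
  | insert p E hp ih =>
    obtain ⟨s, hs₀, hsw, hs₁, hs₂⟩ := hx.exists_split hw hp (hE p (mem_insert_self p E))
    obtain ⟨a, ha, hxa⟩ :=
      ih (fun q hq => hE q (mem_insert_of_mem hq)) (hx.sub_of_split hp hs₁ hs₂)
    refine ⟨Function.update a p s, fun q => ?_, ?_⟩
    · rcases eq_or_ne q p with rfl | hq
      · simpa using ⟨hs₀, hsw⟩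
      · simpa [hq] using ha q
    · have hupdate : zonotopePoint w E (Function.update a p s) = zonotopePoint w E a :=
        sum_congr rfl fun q hq => by rw [Function.update_of_ne (ne_of_mem_of_not_mem hq hp)]
      rw [zonotopePoint, sum_insert hp, Function.update_self, ← zonotopePoint, hupdate, ← hxa]
      abel

theorem isCore_iff_exists_eq_zonotopePoint (hw : ∀ p, 0 ≤ w p) (hE : ∀ p ∈ E, p.1 ≠ p.2) :
    IsCore w E x ↔ ∃ a : ι × ι → ℝ, (∀ p, 0 ≤ a p ∧ a p ≤ w p) ∧ x = zonotopePoint w E a :=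
  ⟨IsCore.exists_eq_zonotopePoint hw hE, fun ⟨_, ha, hxa⟩ => hxa ▸ isCore_zonotopePoint ha⟩

end Core

section Pairs

variable {ι : Type*} [LinearOrder ι]

lemma sum_sum_ite_lt {M : Type*} [AddCommMonoid M] (s : Finset ι) (f : ι → ι → M) :
    ∑ i ∈ s, ∑ j ∈ s, (if i < j then f i j else 0) =
      ∑ p ∈ s ×ˢ s with p.1 < p.2, f p.1 p.2 := by
  rw [sum_filter, sum_product]

lemma inducedWeight_filter_lt [Fintype ι] (f : ι → ι → ℝ) (J : Finset ι) :
    inducedWeight (fun p => f p.1 p.2) {p : ι × ι | p.1 < p.2} J =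
      ∑ i ∈ J, ∑ j ∈ J, (if i < j then f i j else 0) := by
  rw [sum_sum_ite_lt, inducedWeight, filter_filter]
  congr 1
  ext p
  simp [and_comm]

end Pairs

theorem stmt_7_general (n : ℕ) (c : Fin n → Fin n → ℝ)
    (hnn : ∀ i j, 0 ≤ c i j) :
    {x : Fin n → ℝ |
        (∑ j, x j) = (∑ i : Fin n, ∑ j : Fin n, if i < j then c i j else 0) ∧
        ∀ J : Finset (Fin n), J.Nonempty → J ≠ Finset.univ →
          (∑ i ∈ J, ∑ j ∈ J, if i < j then c i j else 0) ≤ ∑ j ∈ J, x j} =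
      {x : Fin n → ℝ | ∃ t : Fin n → Fin n → ℝ,
        (∀ i j, 0 ≤ t i j ∧ t i j ≤ 1) ∧
        x = ∑ i : Fin n, ∑ j : Fin n,
          if i < j then c i j • (t i j • (Pi.single i 1 : Fin n → ℝ)
            + (1 - t i j) • (Pi.single j 1 : Fin n → ℝ)) else 0} := by
  ext x
  simp only [Set.mem_ofPred_eq, ← inducedWeight_filter_lt]
  simp only [sum_sum_ite_lt, univ_product_univ]
  rw [← isCore_iff, isCore_iff_exists_eq_zonotopePoint (fun p => hnn p.1 p.2)
    fun p hp => (mem_filter.1 hp).2.ne, ← exists_segment_param_iff fun p => hnn p.1 p.2]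

theorem stmt_7 (n : ℕ) (c : Fin n → Fin n → ℝ)
    (hsym : ∀ i j, c i j = c j i) (hnn : ∀ i j, 0 ≤ c i j) :
    {x : Fin n → ℝ |
        (∑ j, x j) = (∑ i : Fin n, ∑ j : Fin n, if i < j then c i j else 0) ∧
        ∀ J : Finset (Fin n), J.Nonempty → J ≠ Finset.univ →
          (∑ i ∈ J, ∑ j ∈ J, if i < j then c i j else 0) ≤ ∑ j ∈ J, x j} =
      {x : Fin n → ℝ | ∃ t : Fin n → Fin n → ℝ,
        (∀ i j, 0 ≤ t i j ∧ t i j ≤ 1) ∧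
        x = ∑ i : Fin n, ∑ j : Fin n,
          if i < j then c i j • (t i j • (Pi.single i 1 : Fin n → ℝ)
            + (1 - t i j) • (Pi.single j 1 : Fin n → ℝ)) else 0} :=
  stmt_7_general n c hnn
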